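/- arXiv:2402.11545 — 3 statements merged into one kernel-verified Lean document; each statement's English description precedes it below -/
import Mathlib

section
/- (Stechkin-type tail bound) Let (a_j)_{j≥1} be a nonincreasing sequence of nonnegative reals with Σ_{j=1}^∞ a_j^p =: A^p < ∞ for some 0 < p < 1. Then for every s ≥ 1, the tail satisfies Σ_{j=s+1}^∞ a_j ≤ A · s^{1 − 1/p} · (min(1, 1/p − 1))^{−1}, and in particular Σ_{j>s} a_j ≤ C_p s^{1−1/p} with C_p depending only on p and A. -/
/-!
Since `a` is nonincreasing, each tail term satisfies `a_j = a_j^{1-p} a_j^p ≤ a_{s+1}^{1-p} a_j^p`,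
so the tail is at most `a_{s+1}^{1-p} A^p`. Monotonicity also gives `s a_{s+1}^p ≤ A^p`, i.e.
`a_{s+1} ≤ A s^{-1/p}`, and together these yield the tail bound `A s^{1-1/p}`, which is even
stronger than claimed because `(min 1 (1/p - 1))⁻¹ ≥ 1`.
-/

open Real

lemma le_rpow_one_sub_mul_rpow {x y p : ℝ} (hx : 0 ≤ x) (hxy : x ≤ y) (hp : p ≤ 1) :
    x ≤ y ^ (1 - p) * x ^ p := by
  have hexp : 1 - p + p ≠ 0 := by norm_num
  calc x = x ^ (1 - p) * x ^ p := by rw [← rpow_add' hx hexp, sub_add_cancel, rpow_one]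
    _ ≤ y ^ (1 - p) * x ^ p := by gcongr

lemma Antitone.natCast_mul_le_tsum {g : ℕ → ℝ} (hg : Antitone g) (hg0 : ∀ n, 0 ≤ g n)
    (hsum : Summable g) (s : ℕ) : s * g s ≤ ∑' n, g n :=
  calc (s : ℝ) * g s = (Finset.range s).card • g s := by simp
    _ ≤ ∑ n ∈ Finset.range s, g n :=
      Finset.card_nsmul_le_sum _ _ _ fun n hn => hg (Finset.mem_range.mp hn).le
    _ ≤ ∑' n, g n := hsum.sum_le_tsum _ fun n _ => hg0 n

lemma tsum_nat_add_le_rpow_one_sub_mul_tsum_rpow {a : ℕ → ℝ} {p : ℝ} (ha0 : ∀ j, 0 ≤ a j)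
    (ha : Antitone a) (hp : p ≤ 1) (hsum : Summable fun j => a j ^ p) (s : ℕ) :
    ∑' i, a (s + i) ≤ a s ^ (1 - p) * ∑' j, a j ^ p := by
  have htail : Summable fun i => a (s + i) ^ p := hsum.comp_injective (add_right_injective s)
  have hle : ∀ i, a (s + i) ≤ a s ^ (1 - p) * a (s + i) ^ p := fun i =>
    le_rpow_one_sub_mul_rpow (ha0 _) (ha (Nat.le_add_right s i)) hp
  have hdom : Summable fun i => a s ^ (1 - p) * a (s + i) ^ p := htail.mul_left _
  calc ∑' i, a (s + i) ≤ ∑' i, a s ^ (1 - p) * a (s + i) ^ p :=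
        (hdom.of_nonneg_of_le (fun i => ha0 _) hle).tsum_le_tsum hle hdom
    _ = a s ^ (1 - p) * ∑' i, a (s + i) ^ p := tsum_mul_left
    _ ≤ a s ^ (1 - p) * ∑' j, a j ^ p :=
        mul_le_mul_of_nonneg_left (tsum_comp_le_tsum_of_inj hsum
          (fun j => rpow_nonneg (ha0 j) p) (add_right_injective s)) (rpow_nonneg (ha0 s) _)

lemma rpow_one_sub_mul_rpow_le {x A p s : ℝ} (hx : 0 ≤ x) (hA : 0 ≤ A) (hp0 : 0 < p)
    (hp1 : p ≤ 1) (hs : 0 < s) (h : s * x ^ p ≤ A ^ p) :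
    x ^ (1 - p) * A ^ p ≤ A * s ^ (1 - 1 / p) := by
  have hx_le : x ≤ A * s ^ (-1 / p) := by
    rw [← rpow_le_rpow_iff hx (by positivity) hp0, mul_rpow hA (by positivity),
      ← rpow_mul hs.le, div_mul_cancel₀ _ hp0.ne', rpow_neg_one, ← div_eq_mul_inv,
      le_div_iff₀ hs, mul_comm]
    exact h
  calc x ^ (1 - p) * A ^ p ≤ (A * s ^ (-1 / p)) ^ (1 - p) * A ^ p := by
        gcongr
    _ = A * s ^ (1 - 1 / p) := by
        rw [mul_rpow hA (by positivity), ← rpow_mul hs.le, mul_right_comm,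
          ← rpow_add' hA (by norm_num), sub_add_cancel, rpow_one]
        congr 2
        field_simp
        ring

/-- Stechkin-type tail bound: if `(a_j)_{j≥1}` is nonincreasing, nonnegative, with
`Σ_{j≥1} a_j^p = A^p < ∞` for some `0 < p < 1`, then for every `s ≥ 1`,
`Σ_{j>s} a_j ≤ A s^{1-1/p} (min(1, 1/p - 1))⁻¹`.
(Here `a i` denotes `a_{i+1}`, so the tail `Σ_{j>s}` is `Σ_i a (s+i)`.) -/
theorem stmt10 (p : ℝ) (hp0 : 0 < p) (hp1 : p < 1)
    (a : ℕ → ℝ) (ha0 : ∀ j, 0 ≤ a j) (hmono : ∀ j, a (j + 1) ≤ a j)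
    (A : ℝ) (hA : 0 ≤ A)
    (hsum : Summable (fun j => a j ^ p))
    (hAp : ∑' j : ℕ, a j ^ p = A ^ p) :
    ∀ s : ℕ, 1 ≤ s →
      ∑' i : ℕ, a (s + i) ≤ A * (s : ℝ) ^ (1 - 1 / p) * (min 1 (1 / p - 1))⁻¹ := by
  intro s hs
  have ha : Antitone a := antitone_nat_of_succ_le hmono
  have hpow : Antitone fun j => a j ^ p := fun i j hij => rpow_le_rpow (ha0 j) (ha hij) hp0.le
  have hmin : 1 ≤ (min 1 (1 / p - 1))⁻¹ := by
    have : 1 < 1 / p := by rw [lt_div_iff₀ hp0]; linarith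
    exact (one_le_inv₀ (lt_min one_pos (by linarith))).mpr (min_le_left _ _)
  calc ∑' i, a (s + i) ≤ a s ^ (1 - p) * A ^ p :=
        hAp ▸ tsum_nat_add_le_rpow_one_sub_mul_tsum_rpow ha0 ha hp1.le hsum s
    _ ≤ A * (s : ℝ) ^ (1 - 1 / p) :=
        rpow_one_sub_mul_rpow_le (ha0 s) hA hp0 hp1.le (by exact_mod_cast hs)
          (hAp ▸ hpow.natCast_mul_le_tsum (fun j => rpow_nonneg (ha0 j) p) hsum s)
    _ ≤ A * (s : ℝ) ^ (1 - 1 / p) * (min 1 (1 / p - 1))⁻¹ :=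
        le_mul_of_one_le_right (by positivity) hmin
end

section
/- (Parametric well-posedness with Λ-independent bound) Suppose V = [H_0^1(Ω)]², f ∈ V*, 0 < μ_min ≤ μ, λ ≥ Λ λ̂_min > 0 a.e., B(u,v) = ∫_Ω [2μ ε(u):ε(v) + λ(∇·u)(∇·v)] dx is coercive with B(v,v) ≥ c μ_min ‖v‖_V², and assume there exists a bounded right inverse of the divergence: for every u ∈ V there is u* ∈ V with ∇·u* = ∇·u and ‖u*‖_V ≤ C_0 ‖∇·u‖. If u ∈ V solves B(u,v) = ⟨f,v⟩ for all v ∈ V, then ‖u‖_V + Λ ‖∇·u‖ ≤ C ‖f‖_{V*} with C independent of Λ. -/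
open scoped RealInnerProductSpace

/-!
Testing the variational equation with `u` itself and using coercivity gives
`c μ_min ‖u‖ ≤ ‖f‖`. Testing it with a preimage `u*` of `∇·u` under the divergence turns the
`λ`-term into `⟪λ ∇·u, ∇·u⟫ ≥ Λ λ̂_min ‖∇·u‖²`, while the remaining terms are bounded by
`(‖f‖ + 2 μ_max ‖u‖) ‖u*‖ ≤ C₀ (‖f‖ + 2 μ_max ‖u‖) ‖∇·u‖`. Dividing by `‖∇·u‖` leaves a bound on
`Λ ‖∇·u‖` in which `Λ` no longer appears on the right.
-/

lemma mul_le_of_mul_sq_le_mul {a b x : ℝ} (hb : 0 ≤ b) (hx : 0 ≤ x) (h : a * x ^ 2 ≤ b * x) :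
    a * x ≤ b := by
  rcases hx.eq_or_lt with rfl | hx
  · simpa using hb
  · exact le_of_mul_le_mul_right (by linarith) hx

lemma ContinuousLinearMap.apply_le_opNorm_mul {V : Type*} [SeminormedAddCommGroup V]
    [NormedSpace ℝ V] (f : V →L[ℝ] ℝ) (v : V) : f v ≤ ‖f‖ * ‖v‖ :=
  (le_abs_self _).trans (f.le_opNorm v)

lemma norm_le_div_of_mul_sq_le_apply {V : Type*} [SeminormedAddCommGroup V] [NormedSpace ℝ V]
    {a : ℝ} (ha : 0 < a) (f : V →L[ℝ] ℝ) {u : V} (h : a * ‖u‖ ^ 2 ≤ f u) : ‖u‖ ≤ ‖f‖ / a := by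
  rw [le_div_iff₀' ha]
  exact mul_le_of_mul_sq_le_mul (norm_nonneg f) (norm_nonneg u)
    (h.trans (f.apply_le_opNorm_mul u))

section Lame

variable {V W X : Type*}
  [NormedAddCommGroup V] [InnerProductSpace ℝ V]
  [NormedAddCommGroup W] [InnerProductSpace ℝ W]
  [NormedAddCommGroup X] [InnerProductSpace ℝ X]
  {Eps : V →L[ℝ] W} {Div : V →L[ℝ] X} {Mμ : W →L[ℝ] W} {Mlam : X →L[ℝ] X}
  {μmax Λ lamhatmin C₀ : ℝ} {f : V →L[ℝ] ℝ} {u : V}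

lemma mul_sq_norm_divergence_le_of_rightInverse (hEps : ∀ v : V, ‖Eps v‖ ≤ ‖v‖) (hμmax : 0 ≤ μmax)
    (hμup : ∀ w w' : W, ⟪Mμ w, w'⟫ ≤ μmax * ‖w‖ * ‖w'‖)
    (hlamlow : ∀ ξ : X, Λ * lamhatmin * ‖ξ‖ ^ 2 ≤ ⟪Mlam ξ, ξ⟫)
    {ustar : V} (hdiv : Div ustar = Div u) (hustar : ‖ustar‖ ≤ C₀ * ‖Div u‖)
    (heq : ∀ v : V, 2 * ⟪Mμ (Eps u), Eps v⟫ + ⟪Mlam (Div u), Div v⟫ = f v) :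
    Λ * lamhatmin * ‖Div u‖ ^ 2 ≤ (‖f‖ + 2 * μmax * ‖u‖) * C₀ * ‖Div u‖ := by
  have hstrain : -⟪Mμ (Eps u), Eps ustar⟫ ≤ μmax * ‖u‖ * ‖ustar‖ :=
    calc -⟪Mμ (Eps u), Eps ustar⟫ = ⟪Mμ (Eps u), -Eps ustar⟫ := (inner_neg_right _ _).symm
      _ ≤ μmax * ‖Eps u‖ * ‖-Eps ustar‖ := hμup _ _
      _ ≤ μmax * ‖u‖ * ‖ustar‖ := by
        rw [norm_neg]
        gcongr
        exacts [hEps u, hEps ustar]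
  calc Λ * lamhatmin * ‖Div u‖ ^ 2 ≤ ⟪Mlam (Div u), Div ustar⟫ := hdiv ▸ hlamlow (Div u)
    _ = f ustar - 2 * ⟪Mμ (Eps u), Eps ustar⟫ := by linarith [heq ustar]
    _ ≤ (‖f‖ + 2 * μmax * ‖u‖) * ‖ustar‖ := by linarith [f.apply_le_opNorm_mul ustar]
    _ ≤ (‖f‖ + 2 * μmax * ‖u‖) * (C₀ * ‖Div u‖) := by gcongr
    _ = (‖f‖ + 2 * μmax * ‖u‖) * C₀ * ‖Div u‖ := by ring

lemma mul_norm_divergence_le_of_rightInverse (hEps : ∀ v : V, ‖Eps v‖ ≤ ‖v‖) (hμmax : 0 ≤ μmax)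
    (hlam : 0 < lamhatmin) (hC₀ : 0 ≤ C₀)
    (hμup : ∀ w w' : W, ⟪Mμ w, w'⟫ ≤ μmax * ‖w‖ * ‖w'‖)
    (hlamlow : ∀ ξ : X, Λ * lamhatmin * ‖ξ‖ ^ 2 ≤ ⟪Mlam ξ, ξ⟫)
    (hinv : ∃ ustar : V, Div ustar = Div u ∧ ‖ustar‖ ≤ C₀ * ‖Div u‖)
    (heq : ∀ v : V, 2 * ⟪Mμ (Eps u), Eps v⟫ + ⟪Mlam (Div u), Div v⟫ = f v) :
    Λ * ‖Div u‖ ≤ C₀ / lamhatmin * (‖f‖ + 2 * μmax * ‖u‖) := by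
  obtain ⟨ustar, hdiv, hustar⟩ := hinv
  have h := mul_sq_norm_divergence_le_of_rightInverse hEps hμmax hμup hlamlow hdiv hustar heq
  have key : Λ * lamhatmin * ‖Div u‖ ≤ (‖f‖ + 2 * μmax * ‖u‖) * C₀ :=
    mul_le_of_mul_sq_le_mul (by positivity) (norm_nonneg _) h
  rw [div_mul_eq_mul_div, le_div_iff₀ hlam]
  linarith

end Lame

theorem stmt15_general {V W X : Type*}
    [NormedAddCommGroup V] [InnerProductSpace ℝ V]
    [NormedAddCommGroup W] [InnerProductSpace ℝ W]
    [NormedAddCommGroup X] [InnerProductSpace ℝ X]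
    (Eps : V →L[ℝ] W) (hEps : ∀ v : V, ‖Eps v‖ ≤ ‖v‖)
    (c μmin μmax lamhatmin C₀ : ℝ)
    (hc : 0 < c) (hμmin : 0 < μmin) (hμmax : μmin ≤ μmax)
    (hlam : 0 < lamhatmin) (hC₀ : 0 < C₀) :
    ∃ C : ℝ, 0 < C ∧
      ∀ (Λ : ℝ), 1 ≤ Λ →
      ∀ (Mμ : W →L[ℝ] W) (Mlam : X →L[ℝ] X) (Div : V →L[ℝ] X),
        (∀ w : W, μmin * ‖w‖ ^ 2 ≤ ⟪Mμ w, w⟫) →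
        (∀ w w' : W, ⟪Mμ w, w'⟫ ≤ μmax * ‖w‖ * ‖w'‖) →
        (∀ ξ : X, Λ * lamhatmin * ‖ξ‖ ^ 2 ≤ ⟪Mlam ξ, ξ⟫) →
        (∀ u : V, ∃ ustar : V, Div ustar = Div u ∧ ‖ustar‖ ≤ C₀ * ‖Div u‖) →
        ∀ (f : V →L[ℝ] ℝ) (u : V),
          (∀ v : V, c * μmin * ‖v‖ ^ 2 ≤
            2 * ⟪Mμ (Eps v), Eps v⟫ + ⟪Mlam (Div v), Div v⟫) →
          (∀ v : V, 2 * ⟪Mμ (Eps u), Eps v⟫ + ⟪Mlam (Div u), Div v⟫ = f v) →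
          ‖u‖ + Λ * ‖Div u‖ ≤ C * ‖f‖ := by
  have hμmax0 : 0 ≤ μmax := hμmin.le.trans hμmax
  set K := 1 / (c * μmin)
  refine ⟨K + C₀ / lamhatmin * (1 + 2 * μmax * K), by positivity, ?_⟩
  intro Λ _ Mμ Mlam Div _ hμup hlamlow hinv f u hcoer heq
  have hu : ‖u‖ ≤ K * ‖f‖ := by
    rw [one_div_mul_eq_div]
    exact norm_le_div_of_mul_sq_le_apply (by positivity) f ((hcoer u).trans_eq (heq u))
  have hdiv :=
    mul_norm_divergence_le_of_rightInverse hEps hμmax0 hlam hC₀.le hμup hlamlow (hinv u) heq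
  calc ‖u‖ + Λ * ‖Div u‖ ≤ K * ‖f‖ + C₀ / lamhatmin * (‖f‖ + 2 * μmax * (K * ‖f‖)) :=
        add_le_add hu (hdiv.trans (by gcongr))
    _ = (K + C₀ / lamhatmin * (1 + 2 * μmax * K)) * ‖f‖ := by ring

/-- Parametric well-posedness with `Λ`-independent a priori bound. Abstract setting:
`V` is the solution Hilbert space, `Eps : V → W` the strain operator (bounded by 1),
`Div : V → X` the divergence, `Mμ`/`Mlam` multiplication by the Lamé coefficients with
`μ_min ≤ μ ≤ μ_max`, `λ ≥ Λ λ̂_min`, `B(u,v) = 2⟪μ ε(u), ε(v)⟫ + ⟪λ ∇·u, ∇·v⟫` coercive,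
and the divergence admitting a bounded right inverse. Then any solution of
`B(u,·) = f` satisfies `‖u‖_V + Λ ‖∇·u‖ ≤ C ‖f‖_{V*}` with `C` independent of `Λ`. -/
theorem stmt15 {V W X : Type*}
    [NormedAddCommGroup V] [InnerProductSpace ℝ V] [CompleteSpace V]
    [NormedAddCommGroup W] [InnerProductSpace ℝ W] [CompleteSpace W]
    [NormedAddCommGroup X] [InnerProductSpace ℝ X] [CompleteSpace X]
    (Eps : V →L[ℝ] W) (hEps : ∀ v : V, ‖Eps v‖ ≤ ‖v‖)
    (c μmin μmax lamhatmin C₀ : ℝ)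
    (hc : 0 < c) (hμmin : 0 < μmin) (hμmax : μmin ≤ μmax)
    (hlam : 0 < lamhatmin) (hC₀ : 0 < C₀) :
    ∃ C : ℝ, 0 < C ∧
      ∀ (Λ : ℝ), 1 ≤ Λ →
      ∀ (Mμ : W →L[ℝ] W) (Mlam : X →L[ℝ] X) (Div : V →L[ℝ] X),
        (∀ w : W, μmin * ‖w‖ ^ 2 ≤ ⟪Mμ w, w⟫) →
        (∀ w w' : W, ⟪Mμ w, w'⟫ ≤ μmax * ‖w‖ * ‖w'‖) →
        (∀ ξ : X, Λ * lamhatmin * ‖ξ‖ ^ 2 ≤ ⟪Mlam ξ, ξ⟫) →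
        (∀ u : V, ∃ ustar : V, Div ustar = Div u ∧ ‖ustar‖ ≤ C₀ * ‖Div u‖) →
        ∀ (f : V →L[ℝ] ℝ) (u : V),
          (∀ v : V, c * μmin * ‖v‖ ^ 2 ≤
            2 * ⟪Mμ (Eps v), Eps v⟫ + ⟪Mlam (Div v), Div v⟫) →
          (∀ v : V, 2 * ⟪Mμ (Eps u), Eps v⟫ + ⟪Mlam (Div u), Div v⟫ = f v) →
          ‖u‖ + Λ * ‖Div u‖ ≤ C * ‖f‖ :=
  stmt15_general Eps hEps c μmin μmax lamhatmin C₀ hc hμmin hμmax hlam hC₀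
end

section
/- (Inductive derivative bound) Let (b_j)_{j≥1} and (c_k)_{k≥1} be nonnegative reals and suppose a two-parameter family of nonnegative numbers A(α,β) and D(α,β), indexed by finitely supported multi-indices α, β of nonnegative integers, satisfies A(0,0) + D(0,0) =: E and the recurrence A(α,β) + D(α,β) ≤ Σ_{j: α_j ≠ 0} α_j b_j A(α − e_j, β) + Σ_{k: β_k ≠ 0} β_k c_k D(α, β − e_k) whenever |α| + |β| ≥ 1. Then A(α,β) + D(α,β) ≤ (|α| + |β|)! (Π_j b_j^{α_j}) (Π_k c_k^{β_k}) E for all α, β. -/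
private lemma dec_single (α : ℕ →₀ ℕ) (j : ℕ) (h : α j ≠ 0) :
    (α - Finsupp.single j 1) + Finsupp.single j 1 = α := by
  ext i
  rcases eq_or_ne i j with rfl | hij
  · simp only [Finsupp.add_apply, Finsupp.tsub_apply, Finsupp.single_apply, if_true, eq_self_iff_true]
    omega
  · simp [Finsupp.single_apply, hij.symm]

private lemma sum_dec (α : ℕ →₀ ℕ) (j : ℕ) (h : α j ≠ 0) :
    ((α - Finsupp.single j 1).sum fun _ n => n) + 1 = α.sum fun _ n => n := by
  conv_rhs => rw [← dec_single α j h]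
  rw [Finsupp.sum_add_index' (fun _ => rfl) (fun _ _ _ => rfl),
    Finsupp.sum_single_index rfl]

private lemma prod_dec (b : ℕ → ℝ) (α : ℕ →₀ ℕ) (j : ℕ) (h : α j ≠ 0) :
    b j * ((α - Finsupp.single j 1).prod fun i n => b i ^ n)
      = α.prod fun i n => b i ^ n := by
  conv_rhs => rw [← dec_single α j h]
  rw [Finsupp.prod_add_index' (fun i => pow_zero (b i)) (fun i m n => pow_add (b i) m n)]
  simp [mul_comm]

private lemma prod_nn (b : ℕ → ℝ) (hb : ∀ j, 0 ≤ b j) (α : ℕ →₀ ℕ) :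
    0 ≤ α.prod fun i n => b i ^ n :=
  Finset.prod_nonneg fun i _ => pow_nonneg (hb i) _

/-- Inductive derivative bound: if nonnegative quantities `A(α,β)`, `D(α,β)` indexed by
finitely supported multi-indices satisfy the recurrence
`A(α,β) + D(α,β) ≤ Σ_j α_j b_j A(α-e_j, β) + Σ_k β_k c_k D(α, β-e_k)` for `|α|+|β| ≥ 1`,
then `A(α,β) + D(α,β) ≤ (|α|+|β|)! b^α c^β E` where `E = A(0,0) + D(0,0)`. -/
theorem stmt16 (b c : ℕ → ℝ) (hb : ∀ j, 0 ≤ b j) (hc : ∀ k, 0 ≤ c k)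
    (A D : (ℕ →₀ ℕ) → (ℕ →₀ ℕ) → ℝ)
    (hA : ∀ α β, 0 ≤ A α β) (hD : ∀ α β, 0 ≤ D α β)
    (E : ℝ) (hE : A 0 0 + D 0 0 = E)
    (hrec : ∀ α β : ℕ →₀ ℕ, 1 ≤ (α.sum fun _ n => n) + (β.sum fun _ n => n) →
      A α β + D α β ≤
        (∑ j ∈ α.support, (α j : ℝ) * b j * A (α - Finsupp.single j 1) β) +
          ∑ k ∈ β.support, (β k : ℝ) * c k * D α (β - Finsupp.single k 1)) :
    ∀ α β : ℕ →₀ ℕ,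
      A α β + D α β ≤
        (Nat.factorial ((α.sum fun _ n => n) + (β.sum fun _ n => n)) : ℝ) *
          (α.prod fun j n => b j ^ n) * (β.prod fun k n => c k ^ n) * E := by
  suffices H : ∀ n, ∀ α β : ℕ →₀ ℕ,
      (α.sum fun _ n => n) + (β.sum fun _ n => n) = n →
      A α β + D α β ≤
        (Nat.factorial ((α.sum fun _ n => n) + (β.sum fun _ n => n)) : ℝ) *
          (α.prod fun j n => b j ^ n) * (β.prod fun k n => c k ^ n) * E by
    exact fun α β => H _ α β rfl
  intro n
  induction n using Nat.strong_induction_on with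
  | _ n ih =>
    intro α β hn
    match n with
    | 0 =>
      have hα0 : α = 0 := by
        ext i
        by_cases hi : i ∈ α.support
        · exfalso
          have : α i ≤ α.sum fun _ n => n :=
            Finset.single_le_sum (f := fun i => α i) (fun _ _ => Nat.zero_le _) hi
          have := Finsupp.mem_support_iff.mp hi
          omega
        · simpa using Finsupp.notMem_support_iff.mp hi
      have hβ0 : β = 0 := by
        ext i
        by_cases hi : i ∈ β.support
        · exfalso
          have : β i ≤ β.sum fun _ n => n :=
            Finset.single_le_sum (f := fun i => β i) (fun _ _ => Nat.zero_le _) hi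
          have := Finsupp.mem_support_iff.mp hi
          omega
        · simpa using Finsupp.notMem_support_iff.mp hi
      subst hα0 hβ0
      simp [hE]
    | (m + 1) =>
      have h1 : 1 ≤ (α.sum fun _ n => n) + (β.sum fun _ n => n) := by omega
      refine (hrec α β h1).trans ?_
      have key1 : ∀ j ∈ α.support,
          (α j : ℝ) * b j * A (α - Finsupp.single j 1) β ≤
            (α j : ℝ) * ((Nat.factorial m : ℝ) *
              (α.prod fun i n => b i ^ n) * (β.prod fun k n => c k ^ n) * E) := by
        intro j hj
        have hj' : α j ≠ 0 := Finsupp.mem_support_iff.mp hj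
        have hsum : ((α - Finsupp.single j 1).sum fun _ n => n) + (β.sum fun _ n => n) = m := by
          have := sum_dec α j hj'; omega
        have hA' : A (α - Finsupp.single j 1) β ≤
            (Nat.factorial m : ℝ) * ((α - Finsupp.single j 1).prod fun i n => b i ^ n) *
              (β.prod fun k n => c k ^ n) * E := by
          have := ih m (by omega) (α - Finsupp.single j 1) β hsum
          rw [hsum] at this
          linarith [hD (α - Finsupp.single j 1) β]
        calc (α j : ℝ) * b j * A (α - Finsupp.single j 1) β
            ≤ (α j : ℝ) * b j * ((Nat.factorial m : ℝ) *
              ((α - Finsupp.single j 1).prod fun i n => b i ^ n) *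
              (β.prod fun k n => c k ^ n) * E) := by
              exact mul_le_mul_of_nonneg_left hA'
                (mul_nonneg (by positivity) (hb j))
          _ = (α j : ℝ) * ((Nat.factorial m : ℝ) *
              (b j * ((α - Finsupp.single j 1).prod fun i n => b i ^ n)) *
              (β.prod fun k n => c k ^ n) * E) := by ring
          _ = _ := by rw [prod_dec b α j hj']
      have key2 : ∀ k ∈ β.support,
          (β k : ℝ) * c k * D α (β - Finsupp.single k 1) ≤
            (β k : ℝ) * ((Nat.factorial m : ℝ) *
              (α.prod fun i n => b i ^ n) * (β.prod fun i n => c i ^ n) * E) := by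
        intro k hk
        have hk' : β k ≠ 0 := Finsupp.mem_support_iff.mp hk
        have hsum : (α.sum fun _ n => n) + ((β - Finsupp.single k 1).sum fun _ n => n) = m := by
          have := sum_dec β k hk'; omega
        have hD' : D α (β - Finsupp.single k 1) ≤
            (Nat.factorial m : ℝ) * (α.prod fun i n => b i ^ n) *
              ((β - Finsupp.single k 1).prod fun i n => c i ^ n) * E := by
          have := ih m (by omega) α (β - Finsupp.single k 1) hsum
          rw [hsum] at this
          linarith [hA α (β - Finsupp.single k 1)]
        calc (β k : ℝ) * c k * D α (β - Finsupp.single k 1)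
            ≤ (β k : ℝ) * c k * ((Nat.factorial m : ℝ) *
              (α.prod fun i n => b i ^ n) *
              ((β - Finsupp.single k 1).prod fun i n => c i ^ n) * E) := by
              exact mul_le_mul_of_nonneg_left hD'
                (mul_nonneg (by positivity) (hc k))
          _ = (β k : ℝ) * ((Nat.factorial m : ℝ) *
              (α.prod fun i n => b i ^ n) *
              (c k * ((β - Finsupp.single k 1).prod fun i n => c i ^ n)) * E) := by ring
          _ = _ := by rw [prod_dec c β k hk']
      have S1 := Finset.sum_le_sum key1
      have S2 := Finset.sum_le_sum key2
      rw [← Finset.sum_mul] at S1 S2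
      have hαs : (∑ j ∈ α.support, (α j : ℝ)) = ((α.sum fun _ n => n : ℕ) : ℝ) := by
        rw [Finsupp.sum]; push_cast; rfl
      have hβs : (∑ k ∈ β.support, (β k : ℝ)) = ((β.sum fun _ n => n : ℕ) : ℝ) := by
        rw [Finsupp.sum]; push_cast; rfl
      rw [hαs] at S1; rw [hβs] at S2
      have := add_le_add S1 S2
      refine this.trans (le_of_eq ?_)
      rw [← add_mul]
      have hsum2 : ((α.sum fun _ n => n : ℕ) : ℝ) + ((β.sum fun _ n => n : ℕ) : ℝ)
          = (m : ℝ) + 1 := by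
        rw [← Nat.cast_add, hn]; push_cast; ring
      rw [hsum2, hn]
      have hfac : (((m + 1).factorial : ℕ) : ℝ) = ((m : ℝ) + 1) * (m.factorial : ℝ) := by
        rw [Nat.factorial_succ]; push_cast; ring
      rw [hfac]; ring
end
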